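/- arXiv:0804.4244 — 7 statements merged into one kernel-verified Lean document; each statement's English description precedes it below -/
import Mathlib

section
/- If T : X → X is a proper continuous map on a topological space X and α is an admissible covering of X (an open finite covering such that for each A ∈ α, the closure of A or the complement of A is compact), then for every n ∈ ℕ the covering αⁿ = {A₀ ∩ T⁻¹(A₁) ∩ ... ∩ T⁻ⁿ(Aₙ) : Aᵢ ∈ α} is also an admissible covering of X. -/
open Set Filter Topology

/-- A map is proper if it is continuous and preimages of compact sets are compact. -/
def IsProper {X Y : Type*} [TopologicalSpace X] [TopologicalSpace Y] (f : X → Y) : Prop :=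
  Continuous f ∧ ∀ K : Set Y, IsCompact K → IsCompact (f ⁻¹' K)

/-- An admissible covering: open, finite, covers, and each element has compact
closure or compact complement. -/
def IsAdmissibleCover {X : Type*} [TopologicalSpace X] (α : Set (Set X)) : Prop :=
  α.Finite ∧ (∀ A ∈ α, IsOpen A) ∧ ⋃₀ α = univ ∧
    ∀ A ∈ α, IsCompact (closure A) ∨ IsCompact Aᶜ

/-- `coverIter T α n` is the collection of sets `A₀ ∩ T⁻¹ A₁ ∩ ⋯ ∩ T⁻⁽ⁿ⁻¹⁾ A_{n-1}`
with all `Aᵢ ∈ α`; the paper's `αⁿ` is `coverIter T α (n+1)`. -/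
def coverIter {X : Type*} (T : X → X) (α : Set (Set X)) (n : ℕ) : Set (Set X) :=
  {B | ∃ A : Fin n → Set X, (∀ i, A i ∈ α) ∧ B = ⋂ i : Fin n, T^[i.val] ⁻¹' A i}

/-- `coverNum β` is the minimal cardinality of a (finite) subcover of `β`. -/
noncomputable def coverNum {X : Type*} (β : Set (Set X)) : ℕ :=
  sInf {k | ∃ γ ⊆ β, γ.Finite ∧ ⋃₀ γ = univ ∧ γ.ncard = k}

/-- for a proper map `T` and an admissible covering `α`, each covering
`αⁿ = {A₀ ∩ T⁻¹(A₁) ∩ ⋯ ∩ T⁻ⁿ(Aₙ)}` is again admissible. -/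
theorem coverIter_isAdmissibleCover {X : Type*} [TopologicalSpace X] (T : X → X)
    (hT : IsProper T) (α : Set (Set X)) (hα : IsAdmissibleCover α) (n : ℕ) :
    IsAdmissibleCover (coverIter T α (n + 1)) := by
  obtain ⟨hTc, hTp⟩ := hT
  obtain ⟨hfin, hopen, hcov, hadm⟩ := hα
  have hiter : ∀ k : ℕ, Continuous (T^[k]) := fun k => hTc.iterate k
  refine ⟨?_, ?_, ?_, ?_⟩
  · have hsub : coverIter T α (n + 1) ⊆
        (fun A : Fin (n + 1) → Set X => ⋂ i, T^[i.val] ⁻¹' A i) ''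
          (Set.pi univ fun _ => α) := by
      rintro B ⟨A, hA, rfl⟩
      exact ⟨A, fun i _ => hA i, rfl⟩
    exact ((Set.Finite.pi fun _ => hfin).image _).subset hsub
  · rintro B ⟨A, hA, rfl⟩
    exact isOpen_iInter_of_finite fun i => (hopen _ (hA i)).preimage (hiter i.val)
  · apply eq_univ_of_forall
    intro x
    have hex : ∀ y : X, ∃ A, A ∈ α ∧ y ∈ A := by
      intro y
      have : y ∈ ⋃₀ α := hcov ▸ mem_univ y
      simpa [mem_sUnion] using this
    choose f hf1 hf2 using hex
    refine mem_sUnion.2 ⟨⋂ i : Fin (n + 1), T^[i.val] ⁻¹' f (T^[i.val] x),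
      ⟨fun i => f (T^[i.val] x), fun i => hf1 _, rfl⟩, ?_⟩
    exact mem_iInter.2 fun i => hf2 _
  · rintro B ⟨A, hA, rfl⟩
    by_cases h : ∃ j, IsCompact (closure (A j))
    · obtain ⟨j, hj⟩ := h
      left
      have hKc : IsCompact (T^[j.val] ⁻¹' closure (A j)) := by
        have : ∀ k : ℕ, IsCompact ((T^[k]) ⁻¹' closure (A j)) := by
          intro k
          induction k with
          | zero => simpa using hj
          | succ m ih =>
              have : (T^[m + 1]) ⁻¹' closure (A j) = T ⁻¹' ((T^[m]) ⁻¹' closure (A j)) := by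
                rw [Function.iterate_succ, preimage_comp]
              rw [this]
              exact hTp _ ih
        exact this j.val
      have hKcl : IsClosed (T^[j.val] ⁻¹' closure (A j)) :=
        isClosed_closure.preimage (hiter j.val)
      have hsub : (⋂ i : Fin (n + 1), T^[i.val] ⁻¹' A i) ⊆ T^[j.val] ⁻¹' closure (A j) :=
        (iInter_subset _ j).trans (preimage_mono subset_closure)
      exact hKc.of_isClosed_subset isClosed_closure (closure_minimal hsub hKcl)
    · right
      push_neg at h
      have hc : ∀ i : Fin (n + 1), IsCompact (A i)ᶜ := fun i =>
        (hadm _ (hA i)).resolve_left (h i)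
      have heq : (⋂ i : Fin (n + 1), T^[i.val] ⁻¹' A i)ᶜ =
          ⋃ i : Fin (n + 1), T^[i.val] ⁻¹' (A i)ᶜ := by
        simp [compl_iInter, preimage_compl]
      rw [heq]
      apply isCompact_iUnion
      intro i
      have : ∀ k : ℕ, IsCompact ((T^[k]) ⁻¹' (A i)ᶜ) := by
        intro k
        induction k with
        | zero => simpa using hc i
        | succ m ih =>
            have : (T^[m + 1]) ⁻¹' (A i)ᶜ = T ⁻¹' ((T^[m]) ⁻¹' (A i)ᶜ) := by
              rw [Function.iterate_succ, preimage_comp]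
            rw [this]
            exact hTp _ ih
      exact this i.val
end

section
/- Let T : X → X and S : Y → Y be proper maps on topological spaces, and let f : Y → X be a proper surjective map satisfying f ∘ S = T ∘ f. Then h(T) ≤ h(S), where h denotes the topological entropy defined via admissible coverings. -/
open Set Filter Topology

/-- `h(T, α) = lim (1/n) log N(αⁿ)` (as a limsup, valued in `EReal`). -/
noncomputable def coverEntropyOf {X : Type*} (T : X → X) (α : Set (Set X)) : EReal :=
  Filter.limsup (fun n : ℕ => ((Real.log (coverNum (coverIter T α n)) / n : ℝ) : EReal)) Filter.atTop

/-- The topological entropy `h(T)`, the supremum of `h(T, α)` over admissible coverings. -/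
noncomputable def topEntropy {X : Type*} [TopologicalSpace X] (T : X → X) : EReal :=
  ⨆ (α : Set (Set X)) (_ : IsAdmissibleCover α), coverEntropyOf T α

/-- Every element of the iterated preimage cover is the `f`-preimage of an element of the
iterated cover downstairs. -/
lemma coverIter_preimage_aux {X Y : Type*} (T : X → X) (S : Y → Y) (f : Y → X)
    (hcomm : f ∘ S = T ∘ f) (α : Set (Set X)) (n : ℕ) :
    ∀ C ∈ coverIter S ((f ⁻¹' ·) '' α) n, ∃ D ∈ coverIter T α n, C = f ⁻¹' D := by
  rintro C ⟨B, hB, rfl⟩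
  have h : ∀ i : Fin n, ∃ A ∈ α, B i = f ⁻¹' A := fun i => by
    obtain ⟨A, hA, hAB⟩ := hB i; exact ⟨A, hA, hAB.symm⟩
  choose A hA hAB using h
  have hsemi : Function.Semiconj f S T := fun y => congrFun hcomm y
  refine ⟨⋂ i : Fin n, T^[i.val] ⁻¹' A i, ⟨A, hA, rfl⟩, ?_⟩
  rw [preimage_iInter]
  refine iInter_congr fun i => ?_
  rw [hAB i, ← preimage_comp, ← preimage_comp, (hsemi.iterate_right i.val).comp_eq]

/-- Nonemptiness of the set of subcover cardinalities, for a finite covering. -/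
lemma coverNum_set_nonempty {Z : Type*} (S : Z → Z) (β : Set (Set Z))
    (hfin : β.Finite) (hcov : ⋃₀ β = univ) (n : ℕ) :
    {k | ∃ γ ⊆ coverIter S β n, γ.Finite ∧ ⋃₀ γ = univ ∧ γ.ncard = k}.Nonempty := by
  have hfin' : (coverIter S β n).Finite := by
    have hsub : coverIter S β n ⊆ (fun A : Fin n → Set Z => ⋂ i : Fin n, S^[i.val] ⁻¹' A i) ''
        (univ.pi fun _ => β) := by
      rintro C ⟨A, hA, rfl⟩
      exact ⟨A, fun i _ => hA i, rfl⟩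
    exact (((Set.Finite.pi fun _ => hfin)).image _).subset hsub
  have hcov' : ⋃₀ coverIter S β n = univ := by
    ext y
    simp only [mem_univ, iff_true, mem_sUnion]
    have h : ∀ i : Fin n, ∃ B ∈ β, S^[i.val] y ∈ B := by
      intro i
      have : S^[i.val] y ∈ ⋃₀ β := hcov.symm ▸ mem_univ _
      exact this
    choose B hB hyB using h
    exact ⟨⋂ i : Fin n, S^[i.val] ⁻¹' B i, ⟨B, hB, rfl⟩, mem_iInter.2 hyB⟩
  exact ⟨(coverIter S β n).ncard, coverIter S β n, subset_rfl, hfin', hcov', rfl⟩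

/-- if `f` is a proper surjective semiconjugacy from `S` to `T`,
then `h(T) ≤ h(S)`. -/
theorem topEntropy_le_of_semiconjugacy {X Y : Type*} [TopologicalSpace X] [TopologicalSpace Y]
    (T : X → X) (S : Y → Y) (f : Y → X)
    (hT : IsProper T) (hS : IsProper S) (hf : IsProper f)
    (hsurj : Function.Surjective f) (hcomm : f ∘ S = T ∘ f) :
    topEntropy T ≤ topEntropy S := by
  refine iSup₂_le fun α hα => ?_
  set β : Set (Set Y) := (f ⁻¹' ·) '' α with hβdef
  obtain ⟨hfin, hopen, hcov, hcpt⟩ := hα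
  have hβ : IsAdmissibleCover β := by
    refine ⟨hfin.image _, ?_, ?_, ?_⟩
    · rintro B ⟨A, hA, rfl⟩
      exact (hopen A hA).preimage hf.1
    · rw [hβdef, sUnion_image, ← preimage_sUnion, hcov, preimage_univ]
    · rintro B ⟨A, hA, rfl⟩
      rcases hcpt A hA with h | h
      · exact Or.inl (IsCompact.of_isClosed_subset (hf.2 _ h) isClosed_closure
          (hf.1.closure_preimage_subset A))
      · rw [← preimage_compl]
        exact Or.inr (hf.2 _ h)
  have key : ∀ n, coverNum (coverIter T α n) ≤ coverNum (coverIter S β n) := by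
    intro n
    have hne := coverNum_set_nonempty S β hβ.1 hβ.2.2.1 n
    refine le_csInf hne ?_
    rintro k ⟨γ, hγsub, hγfin, hγcov, rfl⟩
    have hpre := coverIter_preimage_aux T S f hcomm α n
    have hchoice : ∀ C : Set Y, ∃ Dc : Set X, C ∈ γ → Dc ∈ coverIter T α n ∧ C = f ⁻¹' Dc := by
      intro C
      by_cases hC : C ∈ γ
      · obtain ⟨Dc, h1, h2⟩ := hpre C (hγsub hC)
        exact ⟨Dc, fun _ => ⟨h1, h2⟩⟩
      · exact ⟨univ, fun h => absurd h hC⟩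
    choose D hD using hchoice
    have hsub : D '' γ ⊆ coverIter T α n := by
      rintro _ ⟨C, hC, rfl⟩
      exact (hD C hC).1
    have hcovX : ⋃₀ (D '' γ) = univ := by
      ext x
      simp only [mem_univ, iff_true, mem_sUnion]
      obtain ⟨y, rfl⟩ := hsurj x
      have hy : y ∈ ⋃₀ γ := hγcov.symm ▸ mem_univ y
      obtain ⟨C, hC, hyC⟩ := hy
      refine ⟨D C, ⟨C, hC, rfl⟩, ?_⟩
      have := (hD C hC).2
      rw [this] at hyC
      exact hyC
    calc coverNum (coverIter T α n) ≤ (D '' γ).ncard :=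
          Nat.sInf_le ⟨D '' γ, hsub, hγfin.image _, hcovX, rfl⟩
      _ ≤ γ.ncard := Set.ncard_image_le hγfin
  have hle : coverEntropyOf T α ≤ coverEntropyOf S β := by
    refine Filter.limsup_le_limsup (Eventually.of_forall fun n => ?_)
    refine EReal.coe_le_coe_iff.2 ?_
    have h1 : Real.log (coverNum (coverIter T α n)) ≤ Real.log (coverNum (coverIter S β n)) := by
      rcases Nat.eq_zero_or_pos (coverNum (coverIter T α n)) with h | h
      · rw [h]
        simpa using Real.log_natCast_nonneg _
      · exact Real.log_le_log (by exact_mod_cast h) (Nat.cast_le.2 (key n))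
    rcases Nat.eq_zero_or_pos n with hn | hn
    · simp [hn]
    · exact div_le_div_of_nonneg_right h1 (by positivity)
  exact hle.trans (le_iSup₂ (f := fun δ (_ : IsAdmissibleCover δ) => coverEntropyOf S δ) β hβ)
end

section
/- Let T : X → X and S : Y → Y be proper maps and f : Y → X a proper surjective map with f ∘ S = T ∘ f. For any admissible covering α of X, the preimage covering f⁻¹(α) = {f⁻¹(A) : A ∈ α} is an admissible covering of Y, and N(αⁿ) = N(f⁻¹(α)ⁿ) for all n. -/
open Set Filter Topology

/-! Pulling back along `f` is injective on sets because `f` is surjective, and it commutes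
with the iterated coverings because `f ∘ S^[i] = T^[i] ∘ f`. Hence `f⁻¹(αⁿ) = f⁻¹(α)ⁿ`, and
`γ ↦ f⁻¹(γ)` is a bijection between the finite subcovers of `αⁿ` and those of `f⁻¹(α)ⁿ`
that preserves cardinality. Admissibility pulls back because `f` is continuous and proper. -/

theorem sUnion_image_preimage {X Y : Type*} (f : Y → X) (β : Set (Set X)) :
    ⋃₀ ((fun A => f ⁻¹' A) '' β) = f ⁻¹' ⋃₀ β := by
  rw [sUnion_image, preimage_sUnion]

theorem IsAdmissibleCover.preimage {X Y : Type*} [TopologicalSpace X] [TopologicalSpace Y]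
    {α : Set (Set X)} (hα : IsAdmissibleCover α) {f : Y → X} (hf : IsProper f) :
    IsAdmissibleCover ((fun A => f ⁻¹' A) '' α) := by
  obtain ⟨hfin, hopen, hcov, hcpt⟩ := hα
  refine ⟨hfin.image _, ?_, by rw [sUnion_image_preimage, hcov, preimage_univ], ?_⟩
  · rintro _ ⟨A, hA, rfl⟩
    exact (hopen A hA).preimage hf.1
  · rintro _ ⟨A, hA, rfl⟩
    refine (hcpt A hA).imp (fun h => ?_) (fun h => ?_)
    · exact (hf.2 _ h).of_isClosed_subset isClosed_closure (hf.1.closure_preimage_subset A)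
    · exact hf.2 _ h

theorem preimage_iInter_iterate_preimage {X Y : Type*} {T : X → X} {S : Y → Y} {f : Y → X}
    (h : Function.Semiconj f S T) {n : ℕ} (A : Fin n → Set X) :
    f ⁻¹' ⋂ i : Fin n, T^[i.val] ⁻¹' A i = ⋂ i : Fin n, S^[i.val] ⁻¹' (f ⁻¹' A i) := by
  simp only [preimage_iInter, ← preimage_comp, (h.iterate_right _).comp_eq]

theorem coverIter_image_preimage {X Y : Type*} {T : X → X} {S : Y → Y} {f : Y → X}
    (h : Function.Semiconj f S T) (α : Set (Set X)) (n : ℕ) :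
    coverIter S ((fun A => f ⁻¹' A) '' α) n = (fun A => f ⁻¹' A) '' coverIter T α n := by
  ext B
  constructor
  · rintro ⟨A', hA', rfl⟩
    choose A hAα hAA' using hA'
    refine ⟨_, ⟨A, hAα, rfl⟩, ?_⟩
    simp only [preimage_iInter_iterate_preimage h, hAA']
  · rintro ⟨_, ⟨A, hAα, rfl⟩, rfl⟩
    exact ⟨fun i => f ⁻¹' A i, fun i => mem_image_of_mem _ (hAα i),
      preimage_iInter_iterate_preimage h A⟩

theorem coverNum_image_preimage {X Y : Type*} {f : Y → X} (hf : Function.Surjective f)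
    (β : Set (Set X)) :
    coverNum ((fun A => f ⁻¹' A) '' β) = coverNum β := by
  have hinj : Function.Injective (preimage f) := preimage_injective.mpr hf
  unfold coverNum
  congr 1
  ext k
  constructor
  · rintro ⟨_, hγ, hfin, hcov, rfl⟩
    obtain ⟨γ, hγβ, rfl⟩ := subset_image_iff.mp hγ
    refine ⟨γ, hγβ, (finite_image_iff hinj.injOn).mp hfin, ?_,
      (ncard_image_of_injective γ hinj).symm⟩
    rw [sUnion_image_preimage, ← preimage_univ] at hcov
    exact hinj hcov
  · rintro ⟨γ, hγβ, hfin, hcov, rfl⟩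
    exact ⟨_, image_mono hγβ, hfin.image _, by rw [sUnion_image_preimage, hcov, preimage_univ],
      ncard_image_of_injective γ hinj⟩

theorem preimage_cover_admissible_and_coverNum_eq_general {X Y : Type*}
    [TopologicalSpace X] [TopologicalSpace Y]
    (T : X → X) (S : Y → Y) (f : Y → X)
    (hf : IsProper f)
    (hsurj : Function.Surjective f) (hcomm : f ∘ S = T ∘ f)
    (α : Set (Set X)) (hα : IsAdmissibleCover α) :
    IsAdmissibleCover ((fun A => f ⁻¹' A) '' α) ∧
    ∀ n : ℕ, coverNum (coverIter T α n) = coverNum (coverIter S ((fun A => f ⁻¹' A) '' α) n) := by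
  refine ⟨hα.preimage hf, fun n => ?_⟩
  rw [coverIter_image_preimage (Function.semiconj_iff_comp_eq.mpr hcomm),
    coverNum_image_preimage hsurj]

/-- under a proper surjective semiconjugacy `f`, the preimage of an
admissible covering is admissible and the minimal subcover cardinalities of the
iterated coverings agree. -/
theorem preimage_cover_admissible_and_coverNum_eq {X Y : Type*}
    [TopologicalSpace X] [TopologicalSpace Y]
    (T : X → X) (S : Y → Y) (f : Y → X)
    (hT : IsProper T) (hS : IsProper S) (hf : IsProper f)
    (hsurj : Function.Surjective f) (hcomm : f ∘ S = T ∘ f)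
    (α : Set (Set X)) (hα : IsAdmissibleCover α) :
    IsAdmissibleCover ((fun A => f ⁻¹' A) '' α) ∧
    ∀ n : ℕ, coverNum (coverIter T α n) = coverNum (coverIter S ((fun A => f ⁻¹' A) '' α) n) :=
  preimage_cover_admissible_and_coverNum_eq_general T S f hf hsurj hcomm α hα
end

section
/- Let X be a locally compact separable metric space and let d be the restriction to X of a metric d̃ on the one-point compactification X̃ of X. Then d is an admissible metric on X. -/
open Set Filter Topology

/-- A metric is admissible if (1) any family of ball coverings of fixed centers and all
radii `δ ∈ (a,b)` contains an admissible covering, and (2) every admissible covering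
has a Lebesgue number. -/
def IsAdmissibleMetric (X : Type*) [MetricSpace X] : Prop :=
  (∀ (a b : ℝ), 0 < a → a < b → ∀ (k : ℕ) (x : Fin k → X),
    (∀ δ ∈ Set.Ioo a b, (⋃ i, Metric.ball (x i) δ) = Set.univ) →
    ∃ δ ∈ Set.Ioo a b, IsAdmissibleCover (Set.range fun i => Metric.ball (x i) δ)) ∧
  (∀ α : Set (Set X), IsAdmissibleCover α →
    ∃ ε > 0, ∀ y : X, ∃ A ∈ α, Metric.ball y ε ⊆ A)

/-- The extension of `T : X → X` to the one-point compactification, fixing `∞`. -/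
def onePointExt {X : Type*} (T : X → X) : OnePoint X → OnePoint X := Option.map T

/-- if `X` is a locally compact separable metric space whose metric is
the restriction of a metric on the one-point compactification `X̃` (compatible with
the topology of `X̃`), then the metric of `X` is admissible. -/
theorem isAdmissibleMetric_of_restriction {X : Type*} [MetricSpace X]
    [LocallyCompactSpace X] [TopologicalSpace.SeparableSpace X]
    (m : MetricSpace (OnePoint X))
    (htop : m.toUniformSpace.toTopologicalSpace = (inferInstance : TopologicalSpace (OnePoint X)))
    (hrestr : ∀ x y : X, @dist _ m.toDist (x : OnePoint X) (y : OnePoint X) = dist x y) :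
    IsAdmissibleMetric X := by
  classical
  letI m' : MetricSpace (OnePoint X) := m.replaceTopology htop.symm
  set e : X → OnePoint X := ((↑) : X → OnePoint X) with he_def
  have he : IsOpenEmbedding e := OnePoint.isOpenEmbedding_coe
  have hd : ∀ x y : X, dist (e x) (e y) = dist x y := fun x y => hrestr x y
  have hcompiff : ∀ s : Set X, IsCompact s ↔ IsCompact (e '' s) :=
    fun s => he.isEmbedding.isCompact_iff
  haveI : CompactSpace (OnePoint X) := by infer_instance
  constructor
  · -- Part 1
    intro a b ha hab k x hcov
    obtain ⟨δ, hδmem, hδne⟩ := (Set.Ioo_infinite hab).exists_notMem_finite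
      (Set.finite_range fun i => dist (e (x i)) (OnePoint.infty : OnePoint X))
    have hδpos : 0 < δ := lt_trans ha hδmem.1
    refine ⟨δ, hδmem, Set.finite_range _, ?_, ?_, ?_⟩
    · rintro A ⟨i, rfl⟩; exact Metric.isOpen_ball
    · rw [Set.sUnion_range]; exact hcov δ hδmem
    rintro A ⟨i, rfl⟩
    simp only
    set c : ℝ := dist (e (x i)) (OnePoint.infty : OnePoint X) with hc
    have hcne : c ≠ δ := fun h => hδne (h ▸ ⟨i, rfl⟩)
    -- key distance bound: points of the ball are far from ∞ (resp. close)
    have hbd : ∀ y : X, y ∈ Metric.ball (x i) δ → c - δ < dist (e y) (OnePoint.infty : OnePoint X) := by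
      intro y hy
      have h1 : c ≤ dist (e (x i)) (e y) + dist (e y) (OnePoint.infty : OnePoint X) := dist_triangle _ _ _
      rw [hd] at h1
      have : dist (x i) y < δ := by rwa [Metric.mem_ball, dist_comm] at hy
      linarith
    rcases hcne.lt_or_gt with hlt | hlt
    · -- c < δ : complement is compact
      right
      rw [hcompiff]
      have heq : e '' (Metric.ball (x i) δ)ᶜ
          = (e '' Metric.ball (x i) δ)ᶜ ∩ (Metric.ball (OnePoint.infty : OnePoint X) (δ - c))ᶜ := by
        ext z
        constructor
        · rintro ⟨y, hy, rfl⟩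
          refine ⟨fun hz => hy ?_, ?_⟩
          · obtain ⟨y', hy', hy'e⟩ := hz
            rwa [he.injective hy'e] at hy'
          · simp only [Metric.mem_ball, not_lt, mem_compl_iff]
            have h1 : dist (e (x i)) (e y) ≤ c + dist (OnePoint.infty : OnePoint X) (e y) := by
              rw [hc]; exact dist_triangle _ _ _
            rw [hd] at h1
            have h2 : δ ≤ dist (x i) y := by
              simpa [Metric.mem_ball, dist_comm, not_lt] using hy
            linarith [dist_comm (OnePoint.infty : OnePoint X) (e y),
              dist_comm (e y) (OnePoint.infty : OnePoint X)]
        · rintro ⟨hz1, hz2⟩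
          have hzne : z ≠ (OnePoint.infty : OnePoint X) := by
            rintro rfl
            simp only [mem_compl_iff, Metric.mem_ball, dist_self, not_lt] at hz2
            linarith
          obtain ⟨y, rfl⟩ := OnePoint.ne_infty_iff_exists.1 hzne
          exact ⟨y, fun hy => hz1 ⟨y, hy, rfl⟩, rfl⟩
      rw [heq]
      have hclosed : IsClosed ((e '' Metric.ball (x i) δ)ᶜ ∩ (Metric.ball (OnePoint.infty : OnePoint X) (δ - c))ᶜ) :=
        ((he.isOpenMap _ Metric.isOpen_ball).isClosed_compl).inter Metric.isOpen_ball.isClosed_compl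
      exact hclosed.isCompact
    · -- δ < c : closure is compact
      left
      rw [he.isEmbedding.closure_eq_preimage_closure_image]
      have hKcomp : IsCompact (closure (e '' Metric.ball (x i) δ)) := isClosed_closure.isCompact
      have hKsub : closure (e '' Metric.ball (x i) δ) ⊆ range e := by
        have hsub : closure (e '' Metric.ball (x i) δ)
            ⊆ (Metric.ball (OnePoint.infty : OnePoint X) (c - δ))ᶜ := by
          apply closure_minimal _ Metric.isOpen_ball.isClosed_compl
          rintro z ⟨y, hy, rfl⟩
          simp only [mem_compl_iff, Metric.mem_ball, not_lt]
          linarith [hbd y hy, dist_comm (OnePoint.infty : OnePoint X) (e y)]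
        intro z hz
        have hzne : z ≠ (OnePoint.infty : OnePoint X) := by
          rintro rfl
          have := hsub hz
          simp only [mem_compl_iff, Metric.mem_ball, dist_self, not_lt] at this
          linarith
        obtain ⟨y, rfl⟩ := OnePoint.ne_infty_iff_exists.1 hzne
        exact ⟨y, rfl⟩
      rw [hcompiff, Set.image_preimage_eq_of_subset hKsub]
      exact hKcomp
  · -- Part 2
    rintro α ⟨hfin, hopen, hcover, hcc⟩
    rcases isEmpty_or_nonempty X with hX | hX
    · exact ⟨1, one_pos, fun y => (IsEmpty.false y).elim⟩
    -- there is a set with compact complement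
    have hinf : ∃ A ∈ α, IsCompact Aᶜ := by
      by_contra hno
      push_neg at hno
      have hXcomp : IsCompact (Set.univ : Set X) := by
        have hcl : ∀ A ∈ α, IsCompact (closure A) := by
          intro A hA
          rcases hcc A hA with h | h
          · exact h
          · exact absurd h (hno A hA)
        have h1 : IsCompact (⋃ A ∈ α, closure A) := hfin.isCompact_biUnion hcl
        have h2 : (Set.univ : Set X) ⊆ ⋃ A ∈ α, closure A := by
          intro y _
          have : y ∈ ⋃₀ α := hcover ▸ mem_univ y
          obtain ⟨A, hA, hyA⟩ := this
          exact mem_biUnion hA (subset_closure hyA)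
        exact eq_univ_of_univ_subset h2 ▸ h1
      haveI : CompactSpace X := ⟨hXcomp⟩
      obtain ⟨y0⟩ := hX
      have : y0 ∈ ⋃₀ α := hcover ▸ mem_univ y0
      obtain ⟨A, hA, _⟩ := this
      exact hno A hA ((hopen A hA).isClosed_compl.isCompact)
    obtain ⟨A0, hA0, hA0c⟩ := hinf
    -- open cover of the one-point compactification
    set c : α → Set (OnePoint X) := fun A =>
      if IsCompact ((A : Set X)ᶜ) then insert (OnePoint.infty : OnePoint X) (e '' (A : Set X))
      else e '' (A : Set X) with hc_def
    have hsub : ∀ A : α, e '' (A : Set X) ⊆ c A := by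
      intro A
      simp only [hc_def]
      split_ifs
      · exact subset_insert _ _
      · exact subset_rfl
    have hcopen : ∀ A : α, IsOpen (c A) := by
      intro A
      simp only [hc_def]
      split_ifs with h
      · rw [← isClosed_compl_iff]
        have : (insert (OnePoint.infty : OnePoint X) (e '' (A : Set X)))ᶜ = e '' ((A : Set X)ᶜ) := by
          ext z
          simp only [mem_compl_iff, mem_insert_iff, not_or]
          constructor
          · rintro ⟨hz1, hz2⟩
            obtain ⟨y, rfl⟩ := OnePoint.ne_infty_iff_exists.1 hz1
            exact ⟨y, fun hy => hz2 ⟨y, hy, rfl⟩, rfl⟩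
          · rintro ⟨y, hy, rfl⟩
            refine ⟨OnePoint.coe_ne_infty y, fun hz => hy ?_⟩
            obtain ⟨y', hy', hy'e⟩ := hz
            rwa [he.injective hy'e] at hy'
        rw [this]
        exact (h.image he.continuous).isClosed
      · exact he.isOpenMap _ (hopen A A.2)
    have hcov2 : (Set.univ : Set (OnePoint X)) ⊆ ⋃ A : α, c A := by
      intro z _
      induction z using OnePoint.rec with
      | infty =>
        refine mem_iUnion.2 ⟨⟨A0, hA0⟩, ?_⟩
        simp only [hc_def, hA0c, if_true]
        exact mem_insert _ _
      | coe y =>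
        have : y ∈ ⋃₀ α := hcover ▸ mem_univ y
        obtain ⟨A, hA, hyA⟩ := this
        exact mem_iUnion.2 ⟨⟨A, hA⟩, hsub ⟨A, hA⟩ ⟨y, hyA, rfl⟩⟩
    obtain ⟨δ, hδpos, hδ⟩ := lebesgue_number_lemma_of_metric isCompact_univ hcopen hcov2
    refine ⟨δ, hδpos, fun y => ?_⟩
    obtain ⟨A, hball⟩ := hδ (e y) (mem_univ _)
    refine ⟨A, A.2, fun w hw => ?_⟩
    have hwball : e w ∈ Metric.ball (e y) δ := by
      rw [Metric.mem_ball, hd]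
      rwa [Metric.mem_ball] at hw
    have hwc : e w ∈ c A := hball hwball
    have hwim : e w ∈ e '' (A : Set X) := by
      simp only [hc_def] at hwc
      split_ifs at hwc with h
      · rcases hwc with h1 | h1
        · exact absurd h1 (OnePoint.coe_ne_infty w)
        · exact h1
      · exact hwc
    obtain ⟨y', hy', hy'e⟩ := hwim
    rwa [he.injective hy'e] at hy'
end

section
/- Let T : X → X be a proper map on a locally compact separable metric space, let d̃ be a metric on the one-point compactification X̃ inducing its topology, and let d be its restriction to X. Then h^d(T) = h^{d̃}(T̃), where T̃ is the extension of T to X̃ fixing ∞, and h^d denotes the spanning-set entropy of the whole space. -/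
open Set Filter Topology

/-- The dynamical (Bowen) distance `dₙ(x,y) = max_{0 ≤ i ≤ n} d(Tⁱx, Tⁱy)`. -/
noncomputable def dynDist {X : Type*} [PseudoMetricSpace X] (T : X → X) (n : ℕ)
    (x y : X) : ℝ :=
  (Finset.range (n + 1)).sup' (by simp) fun i => dist (T^[i] x) (T^[i] y)

/-- `G` is `(n, ε)`-spanning for `Y`. -/
def IsDynSpanning {X : Type*} [PseudoMetricSpace X] (T : X → X) (n : ℕ) (ε : ℝ)
    (Y G : Set X) : Prop :=
  ∀ y ∈ Y, ∃ x ∈ G, dynDist T n x y < ε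

/-- `Gₙ(ε, Y)`: minimal cardinality of an `(n, ε)`-spanning set of `Y`. -/
noncomputable def spanNum {X : Type*} [PseudoMetricSpace X] (T : X → X) (n : ℕ) (ε : ℝ)
    (Y : Set X) : ℕ :=
  sInf {k | ∃ G : Set X, G.Finite ∧ IsDynSpanning T n ε Y G ∧ G.ncard = k}

/-- `g(ε, Y) = limsup (1/n) log Gₙ(ε, Y)`. -/
noncomputable def spanRate {X : Type*} [PseudoMetricSpace X] (T : X → X) (ε : ℝ)
    (Y : Set X) : EReal :=
  Filter.limsup (fun n : ℕ => ((Real.log (spanNum T n ε Y) / n : ℝ) : EReal)) Filter.atTop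

/-- `h_d(T, Y) = lim_{ε ↓ 0} g(ε, Y)` (the limit as a supremum, since `g` is antitone). -/
noncomputable def spanEntropyOn {X : Type*} [PseudoMetricSpace X] (T : X → X)
    (Y : Set X) : EReal :=
  ⨆ (ε : ℝ) (_ : 0 < ε), spanRate T ε Y

/-- `h^d(T) = h_d(T, X)`, the spanning-set entropy of the whole space. -/
noncomputable def spanEntropy {X : Type*} [PseudoMetricSpace X] (T : X → X) : EReal :=
  spanEntropyOn T Set.univ

/-!
Since `d` is the restriction of `d̃`, the inclusion `X → X̃` is an isometry intertwining `T`
and `T̃`, so it preserves the Bowen distances `dₙ`. An `(n, ε)`-spanning set of `X` together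
with `∞` spans `X̃`, whence `G̃ₙ(ε) ≤ Gₙ(ε) + 1`. Conversely, replacing each point of an
`(n, ε)`-spanning set of `X̃` by a point of `X` at `d̃ₙ`-distance `< ε` (when there is one)
gives an `(n, 2ε)`-spanning set of `X`, whence `Gₙ(2ε) ≤ G̃ₙ(ε)`. Compactness of `X̃` makes
all these numbers finite, and the additive constant and the factor `2` disappear in the limits
`n → ∞` and `ε → 0`.
-/

open Function

section DynDist

variable {X : Type*} [PseudoMetricSpace X] (T : X → X) (n : ℕ)

lemma dynDist_comm (x y : X) : dynDist T n x y = dynDist T n y x :=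
  Finset.sup'_congr _ rfl fun _ _ => dist_comm _ _

lemma dynDist_triangle (x y z : X) : dynDist T n x z ≤ dynDist T n x y + dynDist T n y z :=
  Finset.sup'_le _ _ fun i hi => (dist_triangle _ (T^[i] y) _).trans <|
    add_le_add (Finset.le_sup' (fun j => dist (T^[j] x) (T^[j] y)) hi)
      (Finset.le_sup' (fun j => dist (T^[j] y) (T^[j] z)) hi)

lemma dynDist_self (x : X) : dynDist T n x x = 0 := by
  simp [dynDist]

lemma dynDist_lt_iff {ε : ℝ} (hε : 0 < ε) (x y : X) :
    dynDist T n x y < ε ↔ dist (fun i : Fin (n + 1) => T^[i] x) (fun i => T^[i] y) < ε := by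
  simp [dynDist, dist_pi_lt_iff hε, Finset.sup'_lt_iff, Fin.forall_iff]

lemma Isometry.dynDist_eq {Y : Type*} [PseudoMetricSpace Y] {S : Y → Y} {f : X → Y}
    (hf : Isometry f) (hfTS : Semiconj f T S) (x y : X) :
    dynDist S n (f x) (f y) = dynDist T n x y :=
  Finset.sup'_congr _ rfl fun i _ => by
    rw [← (hfTS.iterate_right i).eq, ← (hfTS.iterate_right i).eq, hf.dist_eq]

end DynDist

section Spanning

variable {X : Type*} [PseudoMetricSpace X] (T : X → X) (n : ℕ) {ε : ℝ}

lemma isDynSpanning_singleton (hε : 0 < ε) (p : X) : IsDynSpanning T n ε {p} {p} := by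
  intro y hy
  exact ⟨p, rfl, by rw [mem_singleton_iff.1 hy, dynDist_self]; exact hε⟩

variable {T n}

lemma IsDynSpanning.union {A B G H : Set X} (hG : IsDynSpanning T n ε A G)
    (hH : IsDynSpanning T n ε B H) : IsDynSpanning T n ε (A ∪ B) (G ∪ H) := by
  rintro y (hy | hy)
  · obtain ⟨x, hx, hxy⟩ := hG y hy
    exact ⟨x, Or.inl hx, hxy⟩
  · obtain ⟨x, hx, hxy⟩ := hH y hy
    exact ⟨x, Or.inr hx, hxy⟩

lemma spanNum_le_ncard {A G : Set X} (hG : G.Finite) (h : IsDynSpanning T n ε A G) :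
    spanNum T n ε A ≤ G.ncard :=
  Nat.sInf_le ⟨G, hG, h, rfl⟩

lemma exists_isDynSpanning_ncard_eq_spanNum {A : Set X}
    (h : ∃ G : Set X, G.Finite ∧ IsDynSpanning T n ε A G) :
    ∃ G : Set X, G.Finite ∧ IsDynSpanning T n ε A G ∧ G.ncard = spanNum T n ε A := by
  obtain ⟨G, hG, hspan⟩ := h
  have hne : {k | ∃ G : Set X, G.Finite ∧ IsDynSpanning T n ε A G ∧ G.ncard = k}.Nonempty :=
    ⟨G.ncard, G, hG, hspan, rfl⟩
  exact Nat.sInf_mem hne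

variable (T n)

lemma exists_finite_isDynSpanning [CompactSpace X] (hε : 0 < ε) :
    ∃ G : Set X, G.Finite ∧ IsDynSpanning T n ε univ G := by
  let F : X → (Fin (n + 1) → X) := fun x i => T^[i] x
  obtain ⟨G, -, hGfin, hcover⟩ := exists_subset_image_finite_and.1 <|
    Metric.finite_approx_of_totallyBounded
      (isCompact_univ.totallyBounded.subset (subset_univ (F '' univ))) ε hε
  refine ⟨G, hGfin, fun x _ => ?_⟩
  have hx := hcover (mem_image_of_mem F (mem_univ x))
  rw [biUnion_image, mem_iUnion₂] at hx
  obtain ⟨g, hg, hxg⟩ := hx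
  exact ⟨g, hg, (dynDist_lt_iff T n hε g x).2 (dist_comm (F x) (F g) ▸ hxg)⟩

end Spanning

section Isometry

variable {X Y : Type*} [PseudoMetricSpace X] [PseudoMetricSpace Y] {T : X → X} {S : Y → Y}
  {f : X → Y} (hf : Isometry f) (hfTS : Semiconj f T S) {n : ℕ} {ε : ℝ}
include hf hfTS

lemma IsDynSpanning.image {A G : Set X} (h : IsDynSpanning T n ε A G) :
    IsDynSpanning S n ε (f '' A) (f '' G) := by
  rintro _ ⟨y, hy, rfl⟩
  obtain ⟨x, hx, hxy⟩ := h y hy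
  exact ⟨f x, mem_image_of_mem f hx, by rwa [hf.dynDist_eq T n hfTS]⟩

lemma IsDynSpanning.exists_two_mul_of_image {A : Set X} {G' : Set Y} (hG' : G'.Finite)
    (h : IsDynSpanning S n ε (f '' A) G') :
    ∃ G : Set X, G.Finite ∧ G.ncard ≤ G'.ncard ∧ IsDynSpanning T n (2 * ε) A G := by
  set G'' := {g ∈ G' | ∃ x, dynDist S n g (f x) < ε}
  have : Finite G'' := (hG'.subset (sep_subset _ _)).to_subtype
  choose c hc using fun g : G'' => g.2.2
  refine ⟨range c, finite_range c, ?_, fun y hy => ?_⟩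
  · calc (range c).ncard = Nat.card (range c) := (Nat.card_coe_set_eq _).symm
      _ ≤ Nat.card G'' := Finite.card_range_le c
      _ = G''.ncard := Nat.card_coe_set_eq _
      _ ≤ G'.ncard := ncard_le_ncard (sep_subset _ _) hG'
  obtain ⟨g, hg, hgy⟩ := h (f y) (mem_image_of_mem f hy)
  let g'' : G'' := ⟨g, hg, y, hgy⟩
  refine ⟨c g'', mem_range_self g'', ?_⟩
  rw [← hf.dynDist_eq T n hfTS]
  calc dynDist S n (f (c g'')) (f y) ≤ dynDist S n (f (c g'')) g + dynDist S n g (f y) :=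
        dynDist_triangle S n _ _ _
    _ < ε + ε := add_lt_add (dynDist_comm S n g _ ▸ hc g'') hgy
    _ = 2 * ε := (two_mul ε).symm

variable [CompactSpace Y] (n)

lemma spanNum_two_mul_le_of_isometry (hε : 0 < ε) :
    spanNum T n (2 * ε) univ ≤ spanNum S n ε univ := by
  obtain ⟨G', hG'fin, hG', hcard⟩ :=
    exists_isDynSpanning_ncard_eq_spanNum (exists_finite_isDynSpanning S n hε)
  obtain ⟨G, hGfin, hGcard, hG⟩ :=
    IsDynSpanning.exists_two_mul_of_image hf hfTS (A := univ) hG'fin fun y _ => hG' y (mem_univ y)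
  exact (spanNum_le_ncard hGfin hG).trans (hcard ▸ hGcard)

lemma exists_finite_isDynSpanning_of_isometry (hε : 0 < ε) :
    ∃ G : Set X, G.Finite ∧ IsDynSpanning T n ε univ G := by
  obtain ⟨G', hG'fin, hG'⟩ := exists_finite_isDynSpanning S n (half_pos hε)
  obtain ⟨G, hGfin, -, hG⟩ :=
    IsDynSpanning.exists_two_mul_of_image hf hfTS (A := univ) hG'fin fun y _ => hG' y (mem_univ y)
  exact ⟨G, hGfin, mul_div_cancel₀ ε two_ne_zero ▸ hG⟩

lemma spanNum_le_spanNum_add_one_of_isometry {p : Y} (hp : range f ∪ {p} = univ) (hε : 0 < ε) :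
    spanNum S n ε univ ≤ spanNum T n ε univ + 1 := by
  obtain ⟨G, hGfin, hG, hcard⟩ :=
    exists_isDynSpanning_ncard_eq_spanNum (exists_finite_isDynSpanning_of_isometry hf hfTS n hε)
  have hspan : IsDynSpanning S n ε univ (f '' G ∪ {p}) := by
    rw [← hp, ← image_univ]
    exact (hG.image hf hfTS).union (isDynSpanning_singleton S n hε p)
  calc spanNum S n ε univ ≤ (f '' G ∪ {p}).ncard :=
        spanNum_le_ncard ((hGfin.image f).union (finite_singleton p)) hspan
    _ ≤ (f '' G).ncard + 1 := by
        simpa only [ncard_singleton] using ncard_union_le (f '' G) {p}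
    _ ≤ spanNum T n ε univ + 1 := hcard ▸ Nat.add_le_add_right (ncard_image_le hGfin) 1

end Isometry

section Entropy

open Real

lemma Real.log_natCast_le_log_natCast {a b : ℕ} (h : a ≤ b) : log a ≤ log b := by
  rcases a.eq_zero_or_pos with rfl | ha
  · simpa using log_natCast_nonneg b
  · exact log_le_log (by positivity) (by exact_mod_cast h)

lemma Real.log_natCast_add_one_le (b : ℕ) : log ((b + 1 : ℕ) : ℝ) ≤ log 2 + log b := by
  rcases b.eq_zero_or_pos with rfl | hb
  · simpa using log_nonneg one_le_two
  · rw [← log_mul two_ne_zero (by positivity)]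
    refine log_le_log (by positivity) ?_
    push_cast
    linarith [(Nat.one_le_cast (α := ℝ)).2 hb]

variable {X Y : Type*} [PseudoMetricSpace X] [PseudoMetricSpace Y] {T : X → X} {S : Y → Y}
  {A : Set X} {B : Set Y} {ε δ : ℝ}

lemma spanRate_le_of_spanNum_le (h : ∀ n, spanNum T n ε A ≤ spanNum S n δ B) :
    spanRate T ε A ≤ spanRate S δ B :=
  limsup_le_limsup (Eventually.of_forall fun n => EReal.coe_le_coe_iff.2 <|
    div_le_div_of_nonneg_right (log_natCast_le_log_natCast (h n)) n.cast_nonneg)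

/-- An additive constant in the spanning numbers costs `log 2 / n → 0` in the rate. -/
lemma spanRate_le_of_spanNum_le_add_one (h : ∀ n, spanNum S n δ B ≤ spanNum T n ε A + 1) :
    spanRate S δ B ≤ spanRate T ε A := by
  let u : ℕ → EReal := fun n => ((log 2 / n : ℝ) : EReal)
  have hu : limsup u atTop = 0 :=
    ((continuous_coe_real_ereal.tendsto 0).comp
      (tendsto_const_div_atTop_nhds_zero_nat (log 2))).limsup_eq
  have hle : ∀ n : ℕ, ((log (spanNum S n δ B) / n : ℝ) : EReal) ≤
      u n + ((log (spanNum T n ε A) / n : ℝ) : EReal) := fun n => by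
    rw [← EReal.coe_add, EReal.coe_le_coe_iff, ← add_div]
    exact div_le_div_of_nonneg_right
      ((log_natCast_le_log_natCast (h n)).trans (log_natCast_add_one_le _)) n.cast_nonneg
  calc spanRate S δ B ≤ limsup (u + fun n => ((log (spanNum T n ε A) / n : ℝ) : EReal)) atTop :=
        limsup_le_limsup (Eventually.of_forall hle)
    _ ≤ limsup u atTop + spanRate T ε A :=
        EReal.limsup_add_le (.inl (hu ▸ EReal.zero_ne_bot)) (.inl (hu ▸ EReal.zero_ne_top))
    _ = spanRate T ε A := by rw [hu, zero_add]

lemma spanEntropyOn_le_of_forall_exists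
    (h : ∀ ε > 0, ∃ δ > 0, spanRate T ε A ≤ spanRate S δ B) :
    spanEntropyOn T A ≤ spanEntropyOn S B :=
  iSup₂_le fun ε hε =>
    let ⟨δ, hδ, hle⟩ := h ε hε
    hle.trans (le_iSup₂ (f := fun δ (_ : 0 < δ) => spanRate S δ B) δ hδ)

end Entropy

theorem spanEntropy_eq_spanEntropy_onePoint_general {X : Type*} [MetricSpace X]
    (T : X → X)
    (m : MetricSpace (OnePoint X))
    (htop : m.toUniformSpace.toTopologicalSpace = (inferInstance : TopologicalSpace (OnePoint X)))
    (hrestr : ∀ x y : X, @dist _ m.toDist (x : OnePoint X) (y : OnePoint X) = dist x y) :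
    spanEntropy T = @spanEntropy (OnePoint X) m.toPseudoMetricSpace (onePointExt T) := by
  let := m
  have : @CompactSpace (OnePoint X) m.toUniformSpace.toTopologicalSpace := by
    rw [htop]; infer_instance
  have hf : Isometry ((↑) : X → OnePoint X) := Isometry.of_dist_eq hrestr
  have hfT : Semiconj ((↑) : X → OnePoint X) T (onePointExt T) := fun _ => rfl
  apply le_antisymm <;> refine spanEntropyOn_le_of_forall_exists fun ε hε => ?_
  · refine ⟨ε / 2, half_pos hε, spanRate_le_of_spanNum_le fun n => ?_⟩
    simpa only [mul_div_cancel₀ ε two_ne_zero] using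
      spanNum_two_mul_le_of_isometry hf hfT n (half_pos hε)
  · exact ⟨ε, hε, spanRate_le_of_spanNum_le_add_one fun n =>
      spanNum_le_spanNum_add_one_of_isometry hf hfT n OnePoint.range_coe_union_infty hε⟩

/-- for a proper map `T` on a locally compact separable metric space whose
metric is the restriction of a compatible metric `d̃` on the one-point compactification,
the spanning-set entropies agree: `h^d(T) = h^{d̃}(T̃)`. -/
theorem spanEntropy_eq_spanEntropy_onePoint {X : Type*} [MetricSpace X]
    [LocallyCompactSpace X] [TopologicalSpace.SeparableSpace X]
    (T : X → X) (hT : IsProper T)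
    (m : MetricSpace (OnePoint X))
    (htop : m.toUniformSpace.toTopologicalSpace = (inferInstance : TopologicalSpace (OnePoint X)))
    (hrestr : ∀ x y : X, @dist _ m.toDist (x : OnePoint X) (y : OnePoint X) = dist x y) :
    spanEntropy T = @spanEntropy (OnePoint X) m.toPseudoMetricSpace (onePointExt T) :=
  spanEntropy_eq_spanEntropy_onePoint_general T m htop hrestr
end

section
/- Let T̃ : X̃ → X̃ be the extension of a proper map T : X → X to the one-point compactification, and let μ̃ be a T̃-invariant Borel probability with μ̃({∞}) = c < 1. Then μ = (1/(1-c)) μ̃|_{Borel(X)} is a T-invariant probability on X and h_{μ̃}(T̃) ≤ h_μ(T). -/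
open Set Filter Topology

open MeasureTheory

/-- A finite Borel (measurable) partition of the space. -/
def IsFinBorelPartition {X : Type*} [MeasurableSpace X] (𝒜 : Set (Set X)) : Prop :=
  𝒜.Finite ∧ (∀ A ∈ 𝒜, MeasurableSet A) ∧ 𝒜.PairwiseDisjoint id ∧ ⋃₀ 𝒜 = Set.univ

/-- The entropy `H(𝒜) = Σ_{B ∈ 𝒜} φ(μ(B))` with `φ(x) = -x log x`. -/
noncomputable def partStatic {X : Type*} [MeasurableSpace X] (μ : Measure X)
    (𝒜 : Set (Set X)) : ℝ :=
  ∑ᶠ B ∈ 𝒜, Real.negMulLog (μ B).toReal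

/-- `h(T, 𝒜) = lim (1/n) H(𝒜ⁿ)` (as a limsup), where `𝒜ⁿ` is the common refinement
`𝒜 ∨ T⁻¹𝒜 ∨ ⋯ ∨ T⁻⁽ⁿ⁻¹⁾𝒜 = coverIter T 𝒜 n`. -/
noncomputable def measPartEntropy {X : Type*} [MeasurableSpace X] (T : X → X)
    (μ : Measure X) (𝒜 : Set (Set X)) : EReal :=
  Filter.limsup (fun n : ℕ => ((partStatic μ (coverIter T 𝒜 n) / n : ℝ) : EReal)) Filter.atTop

/-- The measure-theoretic (Kolmogorov–Sinai) entropy `h_μ(T)`, the supremum of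
`h(T, 𝒜)` over all finite Borel partitions `𝒜`. -/
noncomputable def measEntropy {X : Type*} [MeasurableSpace X] (T : X → X)
    (μ : Measure X) : EReal :=
  ⨆ (𝒜 : Set (Set X)) (_ : IsFinBorelPartition 𝒜), measPartEntropy T μ 𝒜

/-! The pullback `ι⁻¹𝒜` of a partition `𝒜` of `OnePoint X` along `ι : X → OnePoint X` is a
partition of `X`, and since `ι` semiconjugates `T` to `T̃`, `(ι⁻¹𝒜)ⁿ = ι⁻¹(𝒜ⁿ)`. At most one
cell of `𝒜ⁿ` contains `∞`, and it contributes at most `1` to `H_μ̃(𝒜ⁿ)`. Every other cell `B`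
has `μ̃ B = a μ(ι⁻¹B)` with `a = 1 - c`, and `φ(a x) = x φ(a) + a φ(x) ≤ x φ(a) + φ(x)`, so
`H_μ̃(𝒜ⁿ) ≤ H_μ((ι⁻¹𝒜)ⁿ) + 1 + φ(a)`. The bounded defect disappears after dividing by `n`. -/

open OnePoint

section Partition

variable {X : Type*} {𝒜 : Set (Set X)}

theorem IsFinBorelPartition.preimage [MeasurableSpace X] {Y : Type*} [MeasurableSpace Y]
    (h : IsFinBorelPartition 𝒜) {f : Y → X} (hf : Measurable f) :
    IsFinBorelPartition (preimage f '' 𝒜) := by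
  obtain ⟨hfin, hmeas, hdisj, hcov⟩ := h
  refine ⟨hfin.image _, ?_, ?_, ?_⟩
  · rintro _ ⟨A, hA, rfl⟩
    exact hf (hmeas A hA)
  · rintro _ ⟨A, hA, rfl⟩ _ ⟨B, hB, rfl⟩ hne
    exact (hdisj hA hB (ne_of_apply_ne _ hne)).preimage f
  · rw [sUnion_image, ← preimage_iUnion₂, ← sUnion_eq_biUnion, hcov, preimage_univ]

theorem IsFinBorelPartition.coverIter [MeasurableSpace X] (h : IsFinBorelPartition 𝒜) {T : X → X}
    (hT : Measurable T) (n : ℕ) : IsFinBorelPartition (coverIter T 𝒜 n) := by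
  obtain ⟨hfin, hmeas, hdisj, hcov⟩ := h
  refine ⟨?_, ?_, ?_, ?_⟩
  · refine ((Finite.pi fun _ => hfin).image fun A : Fin n → Set X =>
      ⋂ i : Fin n, T^[i.val] ⁻¹' A i).subset ?_
    rintro _ ⟨A, hA, rfl⟩
    exact ⟨A, fun i _ => hA i, rfl⟩
  · rintro _ ⟨A, hA, rfl⟩
    exact .iInter fun i => hT.iterate _ (hmeas _ (hA i))
  · rintro _ ⟨A, hA, rfl⟩ _ ⟨A', hA', rfl⟩ hne
    refine disjoint_left.2 fun x hx hx' => hne ?_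
    rw [show A = A' from funext fun i => hdisj.elim (hA i) (hA' i)
      (not_disjoint_iff.2 ⟨_, mem_iInter.1 hx i, mem_iInter.1 hx' i⟩)]
  · refine eq_univ_of_forall fun x => ?_
    have hx (i : Fin n) : ∃ A ∈ 𝒜, T^[i.val] x ∈ A := mem_sUnion.1 (hcov ▸ mem_univ _)
    choose A hA hxA using hx
    exact ⟨_, ⟨A, hA, rfl⟩, mem_iInter.2 hxA⟩

theorem coverIter_preimage {Y : Type*} {f : Y → X} {T : Y → Y} {S : X → X}
    (h : Function.Semiconj f T S) (𝒜 : Set (Set X)) (n : ℕ) :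
    coverIter T (preimage f '' 𝒜) n = preimage f '' coverIter S 𝒜 n := by
  have hpre (A : Fin n → Set X) :
      f ⁻¹' ⋂ i : Fin n, S^[i.val] ⁻¹' A i = ⋂ i : Fin n, T^[i.val] ⁻¹' (f ⁻¹' A i) := by
    simp only [preimage_iInter, ← preimage_comp, (h.iterate_right _).comp_eq]
  ext B
  constructor
  · rintro ⟨A', hA', rfl⟩
    choose A hA hAA' using hA'
    exact ⟨_, ⟨A, hA, rfl⟩, by simp only [hpre, hAA']⟩
  · rintro ⟨_, ⟨A, hA, rfl⟩, rfl⟩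
    exact ⟨fun i => f ⁻¹' A i, fun i => mem_image_of_mem _ (hA i), hpre A⟩

end Partition

section Entropy

variable {X : Type*} [MeasurableSpace X]

theorem Real.negMulLog_mul_le {a x : ℝ} (ha : a ≤ 1) (hx₀ : 0 ≤ x) (hx₁ : x ≤ 1) :
    negMulLog (a * x) ≤ x * negMulLog a + negMulLog x := by
  rw [negMulLog_mul]
  nlinarith [negMulLog_nonneg hx₀ hx₁]

theorem sum_negMulLog_mul_le_partStatic (μ : Measure X) [IsProbabilityMeasure μ] {a : ℝ}
    (ha₀ : 0 ≤ a) (ha₁ : a ≤ 1) {𝒞 𝒟 : Set (Set X)} (h𝒞 : IsFinBorelPartition 𝒞)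
    (h𝒟 : 𝒟 ⊆ 𝒞) :
    ∑ᶠ B ∈ 𝒟, Real.negMulLog (a * (μ B).toReal) ≤ Real.negMulLog a + partStatic μ 𝒞 := by
  obtain ⟨hfin, hmeas, hdisj, -⟩ := h𝒞
  have hfin𝒟 := hfin.subset h𝒟
  rw [partStatic, finsum_mem_eq_finite_toFinset_sum _ hfin,
    finsum_mem_eq_finite_toFinset_sum _ hfin𝒟]
  have hmass : ∑ B ∈ hfin𝒟.toFinset, μ.real B ≤ 1 := by
    rw [← measureReal_biUnion_finset (f := fun B => B)
      (fun B hB B' hB' => hdisj (h𝒟 (by simpa using hB)) (h𝒟 (by simpa using hB')))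
      fun B hB => hmeas B (h𝒟 (by simpa using hB))]
    exact measureReal_le_one
  have hφ_nonneg (B : Set X) : 0 ≤ Real.negMulLog (μ B).toReal :=
    Real.negMulLog_nonneg ENNReal.toReal_nonneg measureReal_le_one
  calc ∑ B ∈ hfin𝒟.toFinset, Real.negMulLog (a * (μ B).toReal)
      ≤ ∑ B ∈ hfin𝒟.toFinset, ((μ B).toReal * Real.negMulLog a + Real.negMulLog (μ B).toReal) :=
        Finset.sum_le_sum fun B _ => Real.negMulLog_mul_le ha₁ ENNReal.toReal_nonneg
          measureReal_le_one
    _ = (∑ B ∈ hfin𝒟.toFinset, (μ B).toReal) * Real.negMulLog a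
          + ∑ B ∈ hfin𝒟.toFinset, Real.negMulLog (μ B).toReal := by
        rw [Finset.sum_add_distrib, Finset.sum_mul]
    _ ≤ 1 * Real.negMulLog a + ∑ B ∈ hfin.toFinset, Real.negMulLog (μ B).toReal :=
      add_le_add (mul_le_mul_of_nonneg_right hmass (Real.negMulLog_nonneg ha₀ ha₁))
        (Finset.sum_le_sum_of_subset_of_nonneg (Finite.toFinset_subset_toFinset.2 h𝒟)
          fun B _ _ => hφ_nonneg B)
    _ = _ := by rw [one_mul]

end Entropy

theorem Filter.limsup_div_le_limsup_div_of_le_add {u v : ℕ → ℝ} (K : ℝ)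
    (h : ∀ n, u n ≤ v n + K) :
    limsup (fun n : ℕ => ((u n / n : ℝ) : EReal)) atTop
      ≤ limsup (fun n : ℕ => ((v n / n : ℝ) : EReal)) atTop := by
  have hK : Tendsto (fun n : ℕ => ((K / n : ℝ) : EReal)) atTop (𝓝 0) := by
    simpa [Function.comp_def] using (continuous_coe_real_ereal.tendsto 0).comp
      (tendsto_const_div_atTop_nhds_zero_nat K)
  calc limsup (fun n : ℕ => ((u n / n : ℝ) : EReal)) atTop
      ≤ limsup (fun n : ℕ => ((v n / n : ℝ) : EReal) + ((K / n : ℝ) : EReal)) atTop := by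
        refine limsup_le_limsup (Eventually.of_forall fun n => ?_) isCobounded_le_of_bot
          isBounded_le_of_top
        dsimp only
        rw [← EReal.coe_add, EReal.coe_le_coe_iff, ← add_div]
        exact div_le_div_of_nonneg_right (h n) n.cast_nonneg
    _ ≤ limsup (fun n : ℕ => ((v n / n : ℝ) : EReal)) atTop
          + limsup (fun n : ℕ => ((K / n : ℝ) : EReal)) atTop :=
        EReal.limsup_add_le (.inr (hK.limsup_eq ▸ EReal.zero_ne_top))
          (.inr (hK.limsup_eq ▸ EReal.zero_ne_bot))
    _ = limsup (fun n : ℕ => ((v n / n : ℝ) : EReal)) atTop := by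
        rw [hK.limsup_eq, add_zero]

section OnePoint

variable {X : Type*}

theorem semiconj_coe_onePointExt (T : X → X) :
    Function.Semiconj ((↑) : X → OnePoint X) T (onePointExt T) :=
  fun _ => rfl

theorem preimage_onePointExt_image_coe (T : X → X) (s : Set X) :
    onePointExt T ⁻¹' (((↑) : X → OnePoint X) '' s) = (↑) '' (T ⁻¹' s) := by
  ext y
  induction y using OnePoint.rec with
  | infty =>
    exact iff_of_false (by rintro ⟨x, -, hx⟩; exact coe_ne_infty x hx)
      (by rintro ⟨x, -, hx⟩; exact coe_ne_infty x hx)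
  | coe x =>
    exact coe_injective.mem_set_image.trans
      (coe_injective.mem_set_image (s := T ⁻¹' s) (a := x)).symm

variable [TopologicalSpace X]

theorem IsProper.continuous_onePointExt {T : X → X} (hT : IsProper T) :
    Continuous (onePointExt T) :=
  continuous_map hT.1 <| (hasBasis_coclosedCompact.tendsto_iff hasBasis_coclosedCompact).2
    fun K hK => ⟨T ⁻¹' K, ⟨hK.1.preimage hT.1, hT.2 K hK.2⟩, fun _ hx => hx⟩

variable [MeasurableSpace X] [BorelSpace X] [MeasurableSpace (OnePoint X)]
  [BorelSpace (OnePoint X)]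

theorem isProbabilityMeasure_smul_comap_coe (μt : Measure (OnePoint X))
    [IsProbabilityMeasure μt] (hc : μt {∞} < 1) :
    IsProbabilityMeasure ((1 - μt {∞})⁻¹ • μt.comap ((↑) : X → OnePoint X)) := by
  constructor
  rw [Measure.smul_apply, smul_eq_mul, isOpenEmbedding_coe.measurableEmbedding.comap_apply,
    image_univ, ← compl_infty, measure_compl isClosed_infty.measurableSet (measure_ne_top _ _),
    measure_univ, ENNReal.inv_mul_cancel (tsub_pos_of_lt hc).ne'
      (ENNReal.sub_ne_top ENNReal.one_ne_top)]

theorem map_comap_coe_of_map_onePointExt {T : X → X} (hT : Measurable (onePointExt T))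
    {μt : Measure (OnePoint X)} (hinv : μt.map (onePointExt T) = μt) :
    (μt.comap ((↑) : X → OnePoint X)).map T = μt.comap (↑) := by
  have hι : MeasurableEmbedding ((↑) : X → OnePoint X) :=
    isOpenEmbedding_coe.measurableEmbedding
  have hT' : Measurable T := hι.measurable_comp_iff.1 (hT.comp hι.measurable)
  ext s hs
  rw [Measure.map_apply hT' hs, hι.comap_apply, hι.comap_apply,
    ← preimage_onePointExt_image_coe, ← Measure.map_apply hT (hι.measurableSet_image' hs), hinv]

theorem partStatic_le_partStatic_preimage_coe (μt : Measure (OnePoint X)) (μ : Measure X)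
    [IsProbabilityMeasure μ] {a : ENNReal} (ha : a ≤ 1) (hμ : ∀ s, μt ((↑) '' s) = a * μ s)
    {𝒞 : Set (Set (OnePoint X))} (h𝒞 : IsFinBorelPartition 𝒞) :
    partStatic μt 𝒞 ≤ partStatic μ (preimage ((↑) : X → OnePoint X) '' 𝒞)
      + (1 + Real.negMulLog a.toReal) := by
  set atInfty := {B : Set (OnePoint X) | ∞ ∈ B}
  have ha₁ : a.toReal ≤ 1 := ENNReal.toReal_le_of_le_ofReal zero_le_one (by simpa using ha)
  have hcell_infty : ∑ᶠ B ∈ 𝒞 ∩ atInfty, Real.negMulLog (μt B).toReal ≤ 1 := by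
    have hsub : (𝒞 ∩ atInfty).Subsingleton := fun B hB B' hB' =>
      h𝒞.2.2.1.elim hB.1 hB'.1 (not_disjoint_iff.2 ⟨∞, hB.2, hB'.2⟩)
    rcases hsub.eq_empty_or_singleton with h | ⟨B, h⟩
    · simp [h]
    · rw [h, finsum_mem_singleton]
      exact (Real.negMulLog_le_one_sub_self ENNReal.toReal_nonneg).trans
        (sub_le_self _ ENNReal.toReal_nonneg)
  have himage : ∀ B ∈ 𝒞 \ atInfty, (↑) '' ((↑) ⁻¹' B : Set X) = B := fun B hB =>
    image_preimage_eq_of_subset (compl_infty ▸ subset_compl_singleton_iff.2 hB.2)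
  have hcells_coe : ∑ᶠ B ∈ 𝒞 \ atInfty, Real.negMulLog (μt B).toReal
      ≤ Real.negMulLog a.toReal + partStatic μ (preimage ((↑) : X → OnePoint X) '' 𝒞) :=
    calc ∑ᶠ B ∈ 𝒞 \ atInfty, Real.negMulLog (μt B).toReal
        = ∑ᶠ B ∈ 𝒞 \ atInfty, Real.negMulLog (a.toReal * (μ ((↑) ⁻¹' B)).toReal) :=
          finsum_mem_congr rfl fun B hB => by
            conv_lhs => rw [← himage B hB]
            rw [hμ, ENNReal.toReal_mul]
      _ = ∑ᶠ B' ∈ (preimage ((↑) : X → OnePoint X) '' (𝒞 \ atInfty)),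
            Real.negMulLog (a.toReal * (μ B').toReal) :=
          (finsum_mem_image (f := fun B' => Real.negMulLog (a.toReal * (μ B').toReal))
            fun B hB B' hB' h => by
            rw [← himage B hB, ← himage B' hB']
            exact congrArg _ h).symm
      _ ≤ _ := sum_negMulLog_mul_le_partStatic μ ENNReal.toReal_nonneg ha₁
          (h𝒞.preimage continuous_coe.measurable) (image_mono sdiff_subset)
  rw [partStatic, ← finsum_mem_inter_add_sdiff atInfty h𝒞.1]
  linarith

theorem measEntropy_onePointExt_le {T : X → X} (hT : Measurable (onePointExt T))
    (μt : Measure (OnePoint X)) (μ : Measure X) [IsProbabilityMeasure μ] {a : ENNReal}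
    (ha : a ≤ 1) (hμ : ∀ s, μt ((↑) '' s) = a * μ s) :
    measEntropy (onePointExt T) μt ≤ measEntropy T μ := by
  refine iSup₂_le fun 𝒜 h𝒜 => ?_
  calc measPartEntropy (onePointExt T) μt 𝒜
      ≤ measPartEntropy T μ (preimage ((↑) : X → OnePoint X) '' 𝒜) :=
        limsup_div_le_limsup_div_of_le_add _ fun n => by
          rw [coverIter_preimage (semiconj_coe_onePointExt T)]
          exact partStatic_le_partStatic_preimage_coe μt μ ha hμ (h𝒜.coverIter hT n)
    _ ≤ measEntropy T μ :=
        le_iSup₂ (f := fun 𝒜 _ => measPartEntropy T μ 𝒜) _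
          (h𝒜.preimage continuous_coe.measurable)

end OnePoint

open OnePoint in
theorem measEntropy_onePoint_le_general {X : Type*} [TopologicalSpace X]
    [MeasurableSpace X] [BorelSpace X]
    [MeasurableSpace (OnePoint X)] [BorelSpace (OnePoint X)]
    (T : X → X) (hT : IsProper T)
    (μt : Measure (OnePoint X)) (hμt : IsProbabilityMeasure μt)
    (hinv : μt.map (onePointExt T) = μt)
    (hc : μt {(∞ : OnePoint X)} < 1) :
    IsProbabilityMeasure
      ((1 - μt {(∞ : OnePoint X)})⁻¹ • μt.comap (fun x : X => (x : OnePoint X))) ∧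
    ((1 - μt {(∞ : OnePoint X)})⁻¹ • μt.comap (fun x : X => (x : OnePoint X))).map T
      = (1 - μt {(∞ : OnePoint X)})⁻¹ • μt.comap (fun x : X => (x : OnePoint X)) ∧
    measEntropy (onePointExt T) μt ≤
      measEntropy T ((1 - μt {(∞ : OnePoint X)})⁻¹ • μt.comap (fun x : X => (x : OnePoint X))) := by
  have hT' : Measurable (onePointExt T) := hT.continuous_onePointExt.measurable
  have hprob := isProbabilityMeasure_smul_comap_coe (X := X) μt hc
  refine ⟨hprob, by rw [Measure.map_smul, map_comap_coe_of_map_onePointExt hT' hinv],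
    measEntropy_onePointExt_le hT' μt _ (a := 1 - μt {∞}) tsub_le_self fun s => ?_⟩
  have hc' : 1 - μt {∞} ≠ 0 := (tsub_pos_of_lt hc).ne'
  rw [Measure.smul_apply, smul_eq_mul, ← mul_assoc,
    ENNReal.mul_inv_cancel hc' (ENNReal.sub_ne_top ENNReal.one_ne_top), one_mul,
    isOpenEmbedding_coe.measurableEmbedding.comap_apply]

open OnePoint in
/-- if `μ̃` is a `T̃`-invariant Borel probability on the one-point
compactification with `μ̃({∞}) = c < 1`, then `μ = (1/(1-c)) μ̃|_X` is a `T`-invariant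
probability on `X` and `h_{μ̃}(T̃) ≤ h_μ(T)`. -/
theorem measEntropy_onePoint_le {X : Type*} [TopologicalSpace X] [LocallyCompactSpace X]
    [TopologicalSpace.SeparableSpace X] [MeasurableSpace X] [BorelSpace X]
    [MeasurableSpace (OnePoint X)] [BorelSpace (OnePoint X)]
    (T : X → X) (hT : IsProper T)
    (μt : Measure (OnePoint X)) (hμt : IsProbabilityMeasure μt)
    (hinv : μt.map (onePointExt T) = μt)
    (hc : μt {(∞ : OnePoint X)} < 1) :
    IsProbabilityMeasure
      ((1 - μt {(∞ : OnePoint X)})⁻¹ • μt.comap (fun x : X => (x : OnePoint X))) ∧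
    ((1 - μt {(∞ : OnePoint X)})⁻¹ • μt.comap (fun x : X => (x : OnePoint X))).map T
      = (1 - μt {(∞ : OnePoint X)})⁻¹ • μt.comap (fun x : X => (x : OnePoint X)) ∧
    measEntropy (onePointExt T) μt ≤
      measEntropy T ((1 - μt {(∞ : OnePoint X)})⁻¹ • μt.comap (fun x : X => (x : OnePoint X))) :=
  measEntropy_onePoint_le_general T hT μt hμt hinv hc
end

section
/- Let T : V → V be a linear isomorphism of a finite-dimensional real vector space with multiplicative Jordan decomposition T = T_H T_E T_U (hyperbolic, elliptic, unipotent commuting factors). Then the recurrent set of T equals fix(T_H) ∩ fix(T_U), the intersection of the fixed-point subspaces of the hyperbolic and unipotent parts. -/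
open Set Filter Topology

/-- The recurrent set of `T`: points in their own ω-limit set. -/
def recurrentSet {X : Type*} [TopologicalSpace X] (T : X → X) : Set X :=
  {x | MapClusterPt x Filter.atTop fun n => T^[n] x}

/-- `T = T_H T_E T_U` is a multiplicative Jordan decomposition: the factors commute,
`T_H` is diagonalizable with positive eigenvalues, `T_E` is an isometry for some norm,
and `T_U` is unipotent. -/
structure IsMulJordanDecomp {V : Type*} [AddCommGroup V] [Module ℝ V]
    (T TH TE TU : V →ₗ[ℝ] V) : Prop where
  eq : T = TH ∘ₗ TE ∘ₗ TU
  commHE : Commute TH TE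
  commHU : Commute TH TU
  commEU : Commute TE TU
  hyperbolic : ∃ (n : ℕ) (b : Module.Basis (Fin n) ℝ V) (c : Fin n → ℝ),
    (∀ i, 0 < c i) ∧ ∀ i, TH (b i) = c i • b i
  elliptic : ∃ N : V → ℝ, (∀ v, 0 ≤ N v) ∧ (∀ v, N v = 0 ↔ v = 0) ∧
    (∀ v w, N (v + w) ≤ N v + N w) ∧ (∀ (r : ℝ) (v), N (r • v) = |r| * N v) ∧
    ∀ v, N (TE v) = N v
  unipotent : IsNilpotent (TU - LinearMap.id)

/-!
Since `TE` preserves a norm `p`, the `T`-orbit of an eigenvector `w` of `TH` with eigenvalue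
`r > 0` satisfies `p (T^k w) = p (r^k • TU^k w)`. As `TU` is unipotent, `r^k • TU^k w` tends to `0`
when `r < 1`, and escapes to infinity when `r ≥ 1` unless `TU w = w` and `r = 1` (or `w = 0`);
a recurrent point can do neither. The Lagrange interpolation polynomials of `TH` at its eigenvalues
project onto its eigenspaces and commute with `T`, so recurrence passes to the eigencomponents.
Conversely, on `fix TH ∩ fix TU` the map `T` acts as `TE`, whose orbits are bounded and along
which distances are distorted by a bounded factor only; such orbits are recurrent.
-/

open Polynomial Bornology
open scoped NNReal

theorem Function.Semiconj.mapsTo_recurrentSet {X Y : Type*} [TopologicalSpace X]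
    [TopologicalSpace Y] {g : X → Y} {f : X → X} {f' : Y → Y} (h : Function.Semiconj g f f')
    (hg : Continuous g) : MapsTo g (recurrentSet f) (recurrentSet f') := fun x hx => by
  simpa only [recurrentSet, mem_ofPred_eq, Function.comp_def, (h.iterate_right _).eq] using
    hx.continuousAt_comp hg.continuousAt

theorem MapClusterPt.not_tendsto_atTop {ι : Type*} {l : Filter ι} {u : ι → ℝ} {x : ℝ}
    (h : MapClusterPt x l u) : ¬Tendsto u l atTop := fun hu =>
  (h.clusterPt.mono hu).ne (disjoint_iff.mp (disjoint_nhds_atTop x))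

theorem mem_recurrentSet_of_antilipschitzWith_iterate {X : Type*} [PseudoMetricSpace X]
    [ProperSpace X] {f : X → X} {K : ℝ≥0} (hf : ∀ n, AntilipschitzWith K f^[n]) {x : X}
    (hx : IsBounded (range fun n => f^[n] x)) : x ∈ recurrentSet f := by
  obtain ⟨a, -, φ, hφ, hlim⟩ := tendsto_subseq_of_bounded hx fun n => mem_range_self n
  refine Metric.nhds_basis_ball.mapClusterPt_iff_frequently.mpr fun ε hε =>
    frequently_atTop.mpr fun n₀ => ?_
  obtain ⟨J, hJ⟩ := Metric.cauchySeq_iff'.mp hlim.cauchySeq (ε / (K + 1)) (by positivity)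
  set j := φ J + n₀
  have hφj : j ≤ φ j := hφ.le_apply
  refine ⟨φ j - φ J, by omega, ?_⟩
  calc dist (f^[φ j - φ J] x) x
      ≤ K * dist (f^[φ J] (f^[φ j - φ J] x)) (f^[φ J] x) := (hf _).le_mul_dist _ _
    _ = K * dist (f^[φ j] x) (f^[φ J] x) := by
      rw [← Function.iterate_add_apply, Nat.add_sub_cancel' (by omega)]
    _ ≤ K * (ε / (K + 1)) := by
      gcongr; exact (hJ _ (hφ.le_apply.trans le_self_add)).le
    _ < ε := by
      rw [mul_div_assoc', div_lt_iff₀ (by positivity)]; nlinarith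

theorem IsNilpotent.exists_pow_apply_ne_zero_and_apply_pow_apply_eq_zero {R M : Type*}
    [Semiring R] [AddCommMonoid M] [Module R M] {n : Module.End R M} (hn : IsNilpotent n)
    {w : M} {j : ℕ} (hj : (n ^ j) w ≠ 0) : ∃ m, j ≤ m ∧ (n ^ m) w ≠ 0 ∧ n ((n ^ m) w) = 0 := by
  classical
  obtain ⟨d, hd⟩ := hn
  have hex : ∃ i, (n ^ (j + i + 1)) w = 0 :=
    ⟨d, by rw [add_assoc, add_comm d, ← add_assoc, pow_add, hd, mul_zero, LinearMap.zero_apply]⟩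
  refine ⟨j + Nat.find hex, le_self_add, ?_, ?_⟩
  · rcases h : Nat.find hex with _ | i
    · simpa using hj
    · simpa [← add_assoc] using Nat.find_min hex (h ▸ Nat.lt_succ_self i)
  · rw [← Module.End.mul_apply, ← pow_succ']
    exact Nat.find_spec hex

theorem add_one_pow_eq_sum_range_of_pow_eq_zero {A : Type*} [Semiring A] {x : A} {d : ℕ}
    (hx : x ^ d = 0) {k : ℕ} (hk : d ≤ k + 1) :
    (x + 1) ^ k = ∑ j ∈ Finset.range d, x ^ j * (k.choose j : A) := by
  rw [(Commute.one_right x).add_pow, ← Finset.sum_range_add_sum_Ico _ hk,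
    Finset.sum_eq_zero (s := Finset.Ico d (k + 1)) fun j hj => by
      rw [pow_eq_zero_of_le (Finset.mem_Ico.mp hj).1 hx, zero_mul, zero_mul]]
  simp

theorem Module.End.pow_apply_eq_add_nsmul {R M : Type*} [Ring R] [AddCommGroup M] [Module R M]
    {U : Module.End R M} {y : M} (hy : (U - 1) ((U - 1) y) = 0) (k : ℕ) :
    (U ^ k) y = y + k • (U - 1) y := by
  have hUy : U ((U - 1) y) = (U - 1) y := by simpa [sub_eq_zero] using hy
  induction k with
  | zero => simp
  | succ k ih =>
    rw [pow_succ', Module.End.mul_apply, ih, map_add, map_nsmul, hUy, succ_nsmul]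
    simp only [LinearMap.sub_apply, Module.End.one_apply]
    abel

theorem Module.End.tendsto_pow_smul_pow_apply_nhds_zero {M : Type*} [AddCommGroup M]
    [Module ℝ M] [TopologicalSpace M] [IsTopologicalAddGroup M] [ContinuousSMul ℝ M]
    {U : Module.End ℝ M} (hU : IsNilpotent (U - 1)) {r : ℝ} (hr₀ : 0 ≤ r) (hr₁ : r < 1) (w : M) :
    Tendsto (fun k : ℕ => r ^ k • (U ^ k) w) atTop (𝓝 0) := by
  obtain ⟨n, rfl⟩ : ∃ n, U = n + 1 := ⟨U - 1, (sub_add_cancel U 1).symm⟩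
  obtain ⟨d, hd⟩ := hU
  rw [add_sub_cancel_right] at hd
  have hcoeff (j : ℕ) : Tendsto (fun k : ℕ => r ^ k * k.choose j) atTop (𝓝 0) :=
    squeeze_zero (fun k => by positivity)
      (fun k => by rw [mul_comm]; gcongr; exact_mod_cast Nat.choose_le_pow k j)
      (tendsto_pow_const_mul_const_pow_of_lt_one j hr₀ hr₁)
  have hsum := tendsto_finsetSum (Finset.range d) fun j _ => (hcoeff j).smul_const ((n ^ j) w)
  simp only [zero_smul, Finset.sum_const_zero] at hsum
  refine hsum.congr' (eventually_atTop.mpr ⟨d, fun k hk => ?_⟩)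
  show _ = r ^ k • ((n + 1) ^ k) w
  rw [add_one_pow_eq_sum_range_of_pow_eq_zero hd (by omega)]
  simp [Finset.smul_sum, mul_smul, Nat.cast_smul_eq_nsmul]

theorem Module.End.pow_apply_eq_pow_smul {R M : Type*} [CommSemiring R] [AddCommMonoid M]
    [Module R M] {f : Module.End R M} {r : R} {w : M} (hw : f w = r • w) (k : ℕ) :
    (f ^ k) w = r ^ k • w := by
  induction k with
  | zero => simp
  | succ k ih => rw [pow_succ', Module.End.mul_apply, ih, map_smul, hw, smul_smul, pow_succ]

section FiniteDimensional

variable {V : Type*} [NormedAddCommGroup V] [NormedSpace ℝ V] [FiniteDimensional ℝ V]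

namespace Seminorm

theorem continuous_of_finiteDimensional (p : Seminorm ℝ V) : Continuous p :=
  continuousOn_univ.mp (p.convexOn.continuousOn isOpen_univ)

theorem exists_pos_mul_norm_le (p : Seminorm ℝ V) (hp : ∀ v, p v = 0 → v = 0) :
    ∃ c > 0, ∀ v, c * ‖v‖ ≤ p v := by
  obtain ⟨c, hc, hcp⟩ := (isCompact_sphere (0 : V) 1).exists_forall_le'
    p.continuous_of_finiteDimensional.continuousOn (a := 0) fun v hv =>
      (apply_nonneg p v).lt_of_ne' fun h => by simp [hp v h] at hv
  refine ⟨c, hc, fun v => ?_⟩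
  rcases eq_or_ne v 0 with rfl | hv
  · simp
  have hv' : 0 < ‖v‖ := norm_pos_iff.mpr hv
  have := hcp (‖v‖⁻¹ • v) (by simp [norm_smul, hv'.ne'])
  rw [map_smul_eq_mul, norm_inv, norm_norm] at this
  calc c * ‖v‖ ≤ ‖v‖⁻¹ * p v * ‖v‖ := by gcongr
    _ = p v := by field_simp

theorem tendsto_atTop_of_tendsto_cobounded (p : Seminorm ℝ V) (hp : ∀ v, p v = 0 → v = 0)
    {ι : Type*} {l : Filter ι} {u : ι → V} (hu : Tendsto u l (cobounded V)) :
    Tendsto (fun i => p (u i)) l atTop := by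
  obtain ⟨c, hc, hcp⟩ := p.exists_pos_mul_norm_le hp
  exact tendsto_atTop_mono (fun i => hcp (u i))
    ((tendsto_norm_atTop_iff_cobounded.mpr hu).const_mul_atTop hc)

theorem recurrentSet_eq_univ (p : Seminorm ℝ V) (hp : ∀ v, p v = 0 → v = 0)
    {E : V →ₗ[ℝ] V} (hE : ∀ v, p (E v) = p v) : recurrentSet E = univ := by
  obtain ⟨c, hc, hcp⟩ := p.exists_pos_mul_norm_le hp
  obtain ⟨C, hC, hCp⟩ := p.bound_of_continuous_normedSpace p.continuous_of_finiteDimensional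
  have hiter (n : ℕ) (v : V) : p (E^[n] v) = p v :=
    congrFun (Function.iterate_invariant (funext hE) n) v
  refine eq_univ_of_forall fun v => mem_recurrentSet_of_antilipschitzWith_iterate
    (K := ⟨C / c, by positivity⟩) (fun n => ?_) ?_
  · rw [← Module.End.coe_pow]
    refine AddMonoidHomClass.antilipschitz_of_bound (E ^ n) fun x => ?_
    change ‖x‖ ≤ C / c * ‖(E ^ n) x‖
    rw [div_mul_eq_mul_div, le_div_iff₀' hc, Module.End.pow_apply]
    calc c * ‖x‖ ≤ p (E^[n] x) := hiter n x ▸ hcp x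
      _ ≤ C * ‖E^[n] x‖ := hCp _
  · refine isBounded_iff_forall_norm_le.mpr ⟨p v / c, ?_⟩
    rintro _ ⟨n, rfl⟩
    rw [le_div_iff₀' hc, ← hiter n v]
    exact hcp _

end Seminorm

theorem Module.End.tendsto_pow_smul_pow_apply_cobounded {U : Module.End ℝ V}
    (hU : IsNilpotent (U - 1)) {r : ℝ} (hr : 1 ≤ r) {w : V} (hw : U w ≠ w) :
    Tendsto (fun k : ℕ => r ^ k • (U ^ k) w) atTop (cobounded V) := by
  obtain ⟨m, hm, hy, hny⟩ := hU.exists_pow_apply_ne_zero_and_apply_pow_apply_eq_zero (j := 1)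
    (by simpa [sub_eq_zero] using hw)
  obtain ⟨m, rfl⟩ : ∃ m', m = m' + 1 := ⟨m - 1, by omega⟩
  set z := ((U - 1) ^ m) w
  have hz : (U - 1) z = ((U - 1) ^ (m + 1)) w := by rw [pow_succ', Module.End.mul_apply]
  -- `(U - 1) ^ m` maps the orbit onto the line `z + k • (U - 1) z`, where `(U - 1) z ≠ 0`.
  have hA (k : ℕ) : ((U - 1) ^ m) (r ^ k • (U ^ k) w) = r ^ k • (z + k • (U - 1) z) := by
    rw [map_smul, ← Module.End.mul_apply, ((Commute.sub_left (Commute.refl U)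
      (Commute.one_left U)).pow_pow m k).eq, Module.End.mul_apply,
      Module.End.pow_apply_eq_add_nsmul (by rw [hz]; exact hny)]
  have hgrowth :
      Tendsto (fun k : ℕ => ((U - 1) ^ m) (r ^ k • (U ^ k) w)) atTop (cobounded V) := by
    rw [← tendsto_norm_atTop_iff_cobounded]
    refine tendsto_atTop_mono (fun k => ?_) (tendsto_atTop_add_const_right _ (-‖z‖)
      (tendsto_natCast_atTop_atTop.atTop_mul_const (norm_pos_iff.mpr (hz ▸ hy))))
    rw [hA, norm_smul, Real.norm_of_nonneg (by positivity)]
    have h1 : 1 ≤ r ^ k := one_le_pow₀ hr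
    have h2 := norm_le_add_norm_add (k • (U - 1) z) z
    rw [add_comm (k • _), RCLike.norm_nsmul ℝ, nsmul_eq_mul] at h2
    nlinarith [norm_nonneg (z + k • (U - 1) z)]
  exact (tendsto_comap_iff.mpr hgrowth).mono_right
    (LinearMap.toContinuousLinearMap ((U - 1) ^ m)).lipschitz.comap_cobounded_le

end FiniteDimensional

theorem Commute.aeval_left {R A : Type*} [CommSemiring R] [Semiring A] [Algebra R A] {a b : A}
    (h : Commute a b) (q : R[X]) : Commute (aeval a q) b :=
  (Algebra.commute_of_mem_adjoin_singleton_of_commute (aeval_mem_adjoin_singleton R a) h.symm).symm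

namespace Module.End

variable {K M : Type*} [Field K] [DecidableEq K] [AddCommGroup M] [Module K M]
  {f : Module.End K M}

theorem aeval_nodal_image_eq_zero {ι : Type*} [Fintype ι] (b : Module.Basis ι K M)
    (c : ι → K) (hb : ∀ i, f (b i) = c i • b i) :
    aeval f (Lagrange.nodal (Finset.univ.image c) id) = 0 := by
  refine b.ext fun i => ?_
  rw [Lagrange.nodal_eq_mul_nodal_erase (Finset.mem_image_of_mem c (Finset.mem_univ i)), mul_comm,
    map_mul, Module.End.mul_apply]
  simp [hb i]

variable {S : Finset K}

theorem sum_aeval_lagrangeBasis_eq_one (hS : aeval f (Lagrange.nodal S id) = 0) :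
    ∑ r ∈ S, aeval f (Lagrange.basis S id r) = 1 := by
  rcases S.eq_empty_or_nonempty with rfl | hne
  · simpa [Lagrange.nodal_empty] using hS.symm
  · rw [← map_sum, Lagrange.sum_basis (Set.injOn_id _) hne, map_one]

theorem apply_aeval_lagrangeBasis (hS : aeval f (Lagrange.nodal S id) = 0) {r : K} (hr : r ∈ S)
    (v : M) :
    f (aeval f (Lagrange.basis S id r) v) = r • aeval f (Lagrange.basis S id r) v := by
  have hpoly : (X - C r) * Lagrange.basis S id r =
      C (Lagrange.nodalWeight S id r) * Lagrange.nodal S id := by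
    rw [Lagrange.basis_eq_prod_sub_inv_mul_nodal_div hr, ← Lagrange.nodal_erase_eq_nodal_div hr,
      Lagrange.nodal_eq_mul_nodal_erase hr]
    simp only [id_eq]
    ring
  have := congr($(congrArg (aeval f) hpoly) v)
  simpa [hS, sub_eq_zero] using this

end Module.End

namespace IsMulJordanDecomp

section Algebraic

variable {V : Type*} [AddCommGroup V] [Module ℝ V] {T TH TE TU : V →ₗ[ℝ] V}

theorem commute_hyperbolic (hJ : IsMulJordanDecomp T TH TE TU) : Commute TH T := by
  rw [hJ.eq]
  exact (Commute.refl TH).mul_right (hJ.commHE.mul_right hJ.commHU)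

theorem pow_eq (hJ : IsMulJordanDecomp T TH TE TU) (k : ℕ) :
    T ^ k = TE ^ k * TU ^ k * TH ^ k := by
  have hT : T = TE * TU * TH := by
    rw [hJ.eq]
    exact (hJ.commHE.mul_right hJ.commHU).eq
  rw [hT, (hJ.commHE.mul_right hJ.commHU).symm.mul_pow, hJ.commEU.mul_pow]

theorem iterate_apply_of_apply_eq_self (hJ : IsMulJordanDecomp T TH TE TU) {v : V} (hH : TH v = v)
    (hU : TU v = v) (k : ℕ) : T^[k] v = TE^[k] v := by
  rw [← Module.End.pow_apply, hJ.pow_eq, Module.End.mul_apply, Module.End.mul_apply,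
    Module.End.pow_apply TH, Function.iterate_fixed hH, Module.End.pow_apply TU,
    Function.iterate_fixed hU, Module.End.pow_apply]

theorem exists_seminorm_elliptic_invariant (hJ : IsMulJordanDecomp T TH TE TU) :
    ∃ p : Seminorm ℝ V, (∀ v, p v = 0 → v = 0) ∧ ∀ v, p (TE v) = p v := by
  obtain ⟨N, -, hN0, hadd, hsmul, hTE⟩ := hJ.elliptic
  exact ⟨Seminorm.of N hadd fun r v => hsmul r v, fun v => (hN0 v).mp, hTE⟩

end Algebraic

variable {V : Type*} [NormedAddCommGroup V] [NormedSpace ℝ V] [FiniteDimensional ℝ V]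
  {T TH TE TU : V →ₗ[ℝ] V}

theorem apply_eq_self_of_mem_recurrentSet (hJ : IsMulJordanDecomp T TH TE TU) {r : ℝ} (hr : 0 < r)
    {w : V} (hw : TH w = r • w) (hrec : w ∈ recurrentSet T) : TH w = w ∧ TU w = w := by
  obtain ⟨p, hp, hpE⟩ := hJ.exists_seminorm_elliptic_invariant
  have hpcont := p.continuous_of_finiteDimensional
  have horbit (k : ℕ) : p (T^[k] w) = p (r ^ k • (TU ^ k) w) := by
    rw [← Module.End.pow_apply, hJ.pow_eq, Module.End.mul_apply, Module.End.mul_apply,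
      Module.End.pow_apply_eq_pow_smul hw, map_smul, Module.End.pow_apply]
    exact congrFun (Function.iterate_invariant (funext hpE) k) _
  have hclust : MapClusterPt (p w) atTop fun k => p (r ^ k • (TU ^ k) w) := by
    simpa only [Function.comp_def, horbit] using hrec.continuousAt_comp hpcont.continuousAt
  have not_escapes {x : ℕ → V} (hx : Tendsto x atTop (cobounded V))
      (hpx : ∀ k, p (x k) = p (r ^ k • (TU ^ k) w)) : False :=
    hclust.not_tendsto_atTop (by simpa only [hpx] using p.tendsto_atTop_of_tendsto_cobounded hp hx)
  rcases lt_or_ge r 1 with hr₁ | hr₁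
  · have h0 : Tendsto (fun k => p (r ^ k • (TU ^ k) w)) atTop (𝓝 0) := by
      simpa [Function.comp_def] using (hpcont.tendsto 0).comp
        (Module.End.tendsto_pow_smul_pow_apply_nhds_zero hJ.unipotent hr.le hr₁ w)
    have hw0 : w = 0 := hp w (eq_of_nhds_neBot (hclust.clusterPt.mono h0))
    simp [hw0]
  have hU : TU w = w := by
    by_contra hU
    exact not_escapes (Module.End.tendsto_pow_smul_pow_apply_cobounded hJ.unipotent hr₁ hU)
      fun _ => rfl
  refine ⟨?_, hU⟩
  rcases hr₁.eq_or_lt with rfl | hr₁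
  · rw [hw, one_smul]
  by_contra hH
  have hw0 : w ≠ 0 := by rintro rfl; simp at hH
  refine not_escapes (x := fun k => r ^ k • w) ?_ fun k => by
    rw [Module.End.pow_apply, Function.iterate_fixed hU]
  rw [← tendsto_norm_atTop_iff_cobounded]
  simpa [norm_smul, abs_of_pos hr] using
    (tendsto_pow_atTop_atTop_of_one_lt hr₁).atTop_mul_const (norm_pos_iff.mpr hw0)

theorem recurrentSet_subset (hJ : IsMulJordanDecomp T TH TE TU) :
    recurrentSet T ⊆ {v | TH v = v} ∩ {v | TU v = v} := by
  classical
  intro v hv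
  obtain ⟨_, b, c, hc, hb⟩ := hJ.hyperbolic
  set S := Finset.univ.image c
  have hS := Module.End.aeval_nodal_image_eq_zero b c hb
  suffices v ∈ LinearMap.eqLocus TH 1 ⊓ LinearMap.eqLocus TU 1 by simpa using this
  have hsum : v = ∑ r ∈ S, aeval TH (Lagrange.basis S id r) v := by
    rw [← LinearMap.sum_apply, Module.End.sum_aeval_lagrangeBasis_eq_one hS, Module.End.one_apply]
  rw [hsum]
  refine Submodule.sum_mem _ fun r hr => ?_
  obtain ⟨i, -, rfl⟩ := Finset.mem_image.mp hr
  have hπ := hJ.commute_hyperbolic.aeval_left (Lagrange.basis S id (c i))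
  have hrec := (show Function.Semiconj _ T T from fun x => LinearMap.congr_fun hπ.eq x)
    |>.mapsTo_recurrentSet (LinearMap.continuous_of_finiteDimensional _) hv
  simpa using hJ.apply_eq_self_of_mem_recurrentSet (hc i)
    (Module.End.apply_aeval_lagrangeBasis hS hr v) hrec

theorem subset_recurrentSet (hJ : IsMulJordanDecomp T TH TE TU) :
    {v | TH v = v} ∩ {v | TU v = v} ⊆ recurrentSet T := by
  rintro v ⟨hH, hU⟩
  obtain ⟨p, hp, hpE⟩ := hJ.exists_seminorm_elliptic_invariant
  have hv : v ∈ recurrentSet TE := p.recurrentSet_eq_univ hp hpE ▸ mem_univ v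
  simpa only [recurrentSet, mem_ofPred_eq, hJ.iterate_apply_of_apply_eq_self hH hU] using hv

end IsMulJordanDecomp

theorem recurrentSet_eq_fix_inter_fix_general {V : Type*} [NormedAddCommGroup V] [NormedSpace ℝ V]
    [FiniteDimensional ℝ V] (T TH TE TU : V →ₗ[ℝ] V)
    (hJ : IsMulJordanDecomp T TH TE TU) :
    recurrentSet T = {v | TH v = v} ∩ {v | TU v = v} :=
  hJ.recurrentSet_subset.antisymm hJ.subset_recurrentSet

/-- the recurrent set of a linear isomorphism `T` of a finite-dimensional
real vector space equals `fix(T_H) ∩ fix(T_U)`, for the multiplicative Jordan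
decomposition `T = T_H T_E T_U`. -/
theorem recurrentSet_eq_fix_inter_fix {V : Type*} [NormedAddCommGroup V] [NormedSpace ℝ V]
    [FiniteDimensional ℝ V] (T TH TE TU : V →ₗ[ℝ] V)
    (hbij : Function.Bijective T) (hJ : IsMulJordanDecomp T TH TE TU) :
    recurrentSet T = {v | TH v = v} ∩ {v | TU v = v} :=
  recurrentSet_eq_fix_inter_fix_general T TH TE TU hJ
end
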